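/- Let p > q be primes with p ≡ 1 (mod q) and g of multiplicative order q modulo p. Define on A = ℤ_p × ℤ_q the operations (n,m) + (s,t) = (n+s, m+t) and (n,m) ∘ (s,t) = (n + g^m s, m+t). Then (A, +, ∘) is a bi-skew brace with abelian additive group and multiplicative group isomorphic to ℤ_p ⋊_g ℤ_q, and it is the unique (up to isomorphism) non-trivial skew brace of order pq with cyclic additive group. -/

import Mathlib

/-- `(op, e, inv)` is a group structure on `A`. -/
def IsGroupOp {A : Type*} (op : A → A → A) (e : A) (inv : A → A) : Prop :=
  (∀ a b c, op (op a b) c = op a (op b c)) ∧ (∀ a, op e a = a) ∧ (∀ a, op a e = a) ∧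
  (∀ a, op (inv a) a = e) ∧ (∀ a, op a (inv a) = e)

/-- `(A, add, mul)` is a skew left brace: both operations are group operations and
`a ∘ (b + c) = (a ∘ b - a) + a ∘ c`. -/
def IsSkewBrace {A : Type*} (add : A → A → A) (zero : A) (neg : A → A)
    (mul : A → A → A) (one : A) (inv : A → A) : Prop :=
  IsGroupOp add zero neg ∧ IsGroupOp mul one inv ∧
  ∀ a b c, mul a (add b c) = add (add (mul a b) (neg a)) (mul a c)

/-!
The brace axioms for `∘` are direct computations. For uniqueness, move the brace to the additive
group `ℤ_p × ℤ_q ≅ ℤ_pq`. Every additive endomorphism of this ring is multiplication by a scalar,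
so `a ∘ b = a + u(a) b` with `u` a homomorphism from the multiplicative group, of order `pq`, to
the units. Comparing orders gives `u(a) = (ζ(a), 1)` with `ζ(a) ^ q = 1`. The kernel of
`a ↦ a.2` has order `p`, so `ζ` kills it and `ζ(a) = g ^ (c a.2)`; non-triviality means `c ≠ 0`,
and rescaling the second coordinate by `c` gives the isomorphism.
-/

section Semidirect

variable {K : Type*} [CommRing K] {n : ℕ} {g : K}

def semidirectMul (g : K) (x y : K × ZMod n) : K × ZMod n :=
  (x.1 + g ^ x.2.val * y.1, x.2 + y.2)

def semidirectInv (g : K) (x : K × ZMod n) : K × ZMod n :=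
  (-(g ^ (n - x.2.val) * x.1), -x.2)

theorem exists_bijective_semidirectProduct
    (φ : Multiplicative (ZMod n) →* MulAut (Multiplicative K))
    (hφ : ∀ (m : ZMod n) (k : K),
      φ (Multiplicative.ofAdd m) (Multiplicative.ofAdd k) = Multiplicative.ofAdd (g ^ m.val * k)) :
    ∃ e : K × ZMod n → Multiplicative K ⋊[φ] Multiplicative (ZMod n),
      Function.Bijective e ∧ ∀ x y, e (semidirectMul g x y) = e x * e y := by
  refine ⟨SemidirectProduct.equivProd.symm ∘ Prod.map Multiplicative.ofAdd Multiplicative.ofAdd,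
    SemidirectProduct.equivProd.symm.bijective.comp
      (Multiplicative.ofAdd.bijective.prodMap Multiplicative.ofAdd.bijective), fun x y => ?_⟩
  ext
  · simp [semidirectMul, hφ]
  · simp [semidirectMul]

theorem exists_semidirectMul_ne_add [Fact (1 < n)] (hg : g ≠ 1) :
    ∃ x y : K × ZMod n, semidirectMul g x y ≠ x + y := by
  refine ⟨(0, 1), (1, 0), fun h => hg ?_⟩
  simpa [semidirectMul, ZMod.val_one] using congrArg Prod.fst h

variable [NeZero n]

theorem pow_val_add_of_pow_eq_one (hg : g ^ n = 1) (a b : ZMod n) :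
    g ^ (a + b).val = g ^ a.val * g ^ b.val :=
  (AddChar.zmodChar n hg).map_add_eq_mul a b

theorem pow_val_mul_pow_sub_val_of_pow_eq_one (hg : g ^ n = 1) (a : ZMod n) :
    g ^ a.val * g ^ (n - a.val) = 1 := by
  rw [← pow_add, Nat.add_sub_cancel' a.val_lt.le, hg]

theorem pow_val_neg_of_pow_eq_one (hg : g ^ n = 1) (a : ZMod n) :
    g ^ (-a).val = g ^ (n - a.val) := by
  have h := pow_val_add_of_pow_eq_one hg (-a) a
  rw [neg_add_cancel, ZMod.val_zero, pow_zero] at h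
  linear_combination
    -g ^ (n - a.val) * h - g ^ (-a).val * pow_val_mul_pow_sub_val_of_pow_eq_one hg a

theorem isGroupOp_semidirectMul (hg : g ^ n = 1) :
    IsGroupOp (semidirectMul (n := n) g) 0 (semidirectInv g) := by
  have hsub := pow_val_mul_pow_sub_val_of_pow_eq_one hg
  refine ⟨fun a b c => ?_, fun a => ?_, fun a => ?_, fun a => ?_, fun a => ?_⟩ <;>
    ext <;> simp only [semidirectMul, semidirectInv, Prod.fst_zero, Prod.snd_zero, ZMod.val_zero,
      pow_zero, pow_val_add_of_pow_eq_one hg, pow_val_neg_of_pow_eq_one hg] <;>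
    first | ring1 | linear_combination (-a.1) * hsub a.2

theorem isGroupOp_add {A : Type*} [AddGroup A] : IsGroupOp (· + · : A → A → A) 0 (-·) :=
  ⟨add_assoc, zero_add, add_zero, neg_add_cancel, add_neg_cancel⟩

theorem isSkewBrace_add_semidirectMul (hg : g ^ n = 1) :
    IsSkewBrace (· + ·) 0 (-·) (semidirectMul (n := n) g) 0 (semidirectInv g) := by
  refine ⟨isGroupOp_add, isGroupOp_semidirectMul hg, fun a b c => ?_⟩
  ext <;> simp only [semidirectMul, Prod.fst_add, Prod.snd_add, Prod.fst_neg, Prod.snd_neg] <;> ring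

theorem isSkewBrace_semidirectMul_add (hg : g ^ n = 1) :
    IsSkewBrace (semidirectMul (n := n) g) 0 (semidirectInv g) (· + ·) 0 (-·) := by
  refine ⟨isGroupOp_semidirectMul hg, isGroupOp_add, fun a b c => ?_⟩
  have hb : a.2 + b.2 + -a.2 = b.2 := by ring
  ext <;> simp only [semidirectMul, semidirectInv, Prod.fst_add, Prod.snd_add, hb,
    pow_val_add_of_pow_eq_one hg]
  · linear_combination (g ^ b.2.val * a.1) * pow_val_mul_pow_sub_val_of_pow_eq_one hg a.2
  · ring

end Semidirect

abbrev IsGroupOp.toGroup {A : Type*} {op : A → A → A} {e : A} {inv : A → A}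
    (h : IsGroupOp op e inv) : Group A where
  mul := op
  one := e
  inv := inv
  mul_assoc := h.1
  one_mul := h.2.1
  mul_one := h.2.2.1
  inv_mul_cancel := h.2.2.2.1

theorem IsGroupOp.map_neg {A R : Type*} [AddGroup R] {add : A → A → A} {zero : A}
    {neg : A → A} (h : IsGroupOp add zero neg) {F : A → R}
    (hF : ∀ a b, F (add a b) = F a + F b) (a : A) : F (neg a) = -F a := by
  have hzero : F zero = 0 := by
    simpa [h.2.1] using hF zero zero
  exact eq_neg_of_add_eq_zero_left (by rw [← hF, h.2.2.2.1, hzero])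

theorem AddMonoidHom.apply_eq_mul_apply_one {R : Type*} [Semiring R]
    (hR : Function.Surjective (Nat.cast : ℕ → R)) (f : R →+ R) (y : R) : f y = y * f 1 := by
  obtain ⟨k, rfl⟩ := hR y
  rw [← nsmul_one, map_nsmul, smul_mul_assoc, one_mul]

theorem IsSkewBrace.exists_apply_mul_eq_add_mul {A R : Type*} [CommRing R]
    (hR : Function.Surjective (Nat.cast : ℕ → R)) {add : A → A → A} {zero : A} {neg : A → A}
    {mul : A → A → A} {one : A} {inv : A → A} (h : IsSkewBrace add zero neg mul one inv)
    (F : A ≃ R) (hF : ∀ a b, F (add a b) = F a + F b) :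
    ∃ u : A → R, u one = 1 ∧ (∀ a b, u (mul a b) = u a * u b) ∧
      ∀ a b, F (mul a b) = F a + u a * F b := by
  obtain ⟨hadd, ⟨hassoc, hone_mul, -⟩, hbrace⟩ := h
  have hsymm_add : ∀ y z, F.symm (y + z) = add (F.symm y) (F.symm z) := fun y z =>
    F.injective (by simp [hF])
  let lam (a : A) : R →+ R := AddMonoidHom.mk' (fun y => F (mul a (F.symm y)) - F a)
    fun y z => by simp only [hsymm_add, hbrace, hF, hadd.map_neg hF]; ring
  have hmul : ∀ a b, F (mul a b) = F a + lam a 1 * F b := fun a b => by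
    rw [mul_comm, ← (lam a).apply_eq_mul_apply_one hR]
    simp [lam]
  have hone : F one = 0 := by
    simpa [lam, hone_mul] using (lam one).map_zero
  refine ⟨fun a => lam a 1, ?_, fun a b => ?_, hmul⟩
  · simpa [hone, hone_mul] using (hmul one (F.symm 1)).symm
  · have h := hassoc a b (F.symm 1)
    apply_fun F at h
    simp only [hmul, F.apply_symm_apply] at h
    linear_combination h

theorem MonoidHom.card_ker_mul_card_of_surjective {G H : Type*} [Group G] [Group H]
    {π : G →* H} (hπ : Function.Surjective π) : Nat.card π.ker * Nat.card H = Nat.card G := by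
  rw [← π.ker.card_mul_index, Subgroup.index_ker, π.range_eq_top.2 hπ, Subgroup.card_top]

theorem MonoidHom.exists_eq_comp_of_coprime_card_ker {G H M : Type*} [Group G] [Group H]
    [Monoid M] {π : G →* H} (hπ : Function.Surjective π) {f : G →* M} {n : ℕ}
    (hn : (Nat.card π.ker).Coprime n) (hf : ∀ x, f x ^ n = 1) :
    ∃ ψ : H →* M, ∀ x, f x = ψ (π x) := by
  have hker : ∀ x ∈ π.ker, f x = 1 := fun x hx => by
    have hcard : x ^ Nat.card π.ker = 1 := by
      simpa using congrArg Subtype.val (pow_card_eq_one' (x := (⟨x, hx⟩ : π.ker)))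
    exact (pow_eq_one_iff_of_coprime hn).1 ⟨by rw [← map_pow, hcard, map_one], hf x⟩
  have hfactor : ∀ x y, π x = π y → f x = f y := fun x y hxy => by
    have hmem : x⁻¹ * y ∈ π.ker := by simp [MonoidHom.mem_ker, hxy]
    rw [← mul_inv_cancel_left x y, map_mul, hker _ hmem, mul_one]
  have hs := Function.surjInv_eq hπ
  refine ⟨{ toFun := fun h => f (Function.surjInv hπ h),
             map_one' := by rw [hfactor _ 1 (by rw [hs, map_one]), map_one],
             map_mul' := fun a b => by
               rw [← map_mul]; exact hfactor _ _ (by rw [hs, map_mul, hs, hs]) },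
    fun x => hfactor _ _ (hs _).symm⟩

theorem IsPrimitiveRoot.exists_apply_ofAdd_eq_pow_val {R : Type*} [CommRing R] [IsDomain R]
    {n : ℕ} [NeZero n] {ζ : R} (hζ : IsPrimitiveRoot ζ n) (ψ : Multiplicative (ZMod n) →* R) :
    ∃ c : ZMod n, ∀ t, ψ (Multiplicative.ofAdd t) = ζ ^ (c * t).val := by
  have hpow : ∀ t : ZMod n, ψ (Multiplicative.ofAdd t) = ψ (Multiplicative.ofAdd 1) ^ t.val :=
    fun t => by rw [← map_pow, ← ofAdd_nsmul, nsmul_one, ZMod.natCast_zmod_val]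
  obtain ⟨i, -, hi⟩ := hζ.eq_pow_of_pow_eq_one (ξ := ψ (Multiplicative.ofAdd 1)) (by
    rw [← map_pow, ← ofAdd_nsmul, nsmul_one, ZMod.natCast_self, ofAdd_zero, map_one])
  refine ⟨i, fun t => ?_⟩
  rw [hpow, ← hi, ← pow_mul, ← AddChar.zmodChar_apply' hζ.pow_eq_one,
    AddChar.zmodChar_apply]
  push_cast
  rw [ZMod.natCast_zmod_val]

theorem ZMod.eq_one_of_pow_eq_one_of_coprime {ℓ : ℕ} [Fact ℓ.Prime] {x : ZMod ℓ} {m : ℕ}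
    (hm0 : m ≠ 0) (hm : m.Coprime (ℓ - 1)) (hx : x ^ m = 1) : x = 1 := by
  have hx0 : x ≠ 0 := by
    rintro rfl
    simp [zero_pow hm0] at hx
  exact (pow_eq_one_iff_of_coprime hm).1 ⟨hx, ZMod.pow_card_sub_one_eq_one hx0⟩

theorem ZMod.fst_pow_eq_one_and_snd_eq_one_of_pow_mul_eq_one {p q : ℕ} [Fact p.Prime]
    [Fact q.Prime] (hlt : q < p) {x : ZMod p × ZMod q} (hx : x ^ (p * q) = 1) :
    x.1 ^ q = 1 ∧ x.2 = 1 := by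
  have hp := (Fact.out : p.Prime)
  have hq := (Fact.out : q.Prime)
  refine ⟨ZMod.eq_one_of_pow_eq_one_of_coprime hp.ne_zero
      ((Nat.coprime_self_sub_right hp.one_le).2 (Nat.coprime_one_right p)) ?_,
    ZMod.eq_one_of_pow_eq_one_of_coprime (mul_ne_zero hp.ne_zero hq.ne_zero)
      (Nat.Coprime.mul_left (Nat.coprime_of_lt_prime (by have := hq.two_le; omega) (by omega) hp)
        ((Nat.coprime_self_sub_right hq.one_le).2 (Nat.coprime_one_right q))) ?_⟩
  · rw [← pow_mul, mul_comm]
    simpa using congrArg Prod.fst hx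
  · simpa using congrArg Prod.snd hx

section Uniqueness

variable {p q : ℕ} {g : ZMod p} {A : Type*} {add : A → A → A} {zero : A} {neg : A → A}
  {mul : A → A → A} {one : A} {inv : A → A}

theorem IsSkewBrace.exists_equiv_apply_mul_eq_of_cyclic (hp : p.Prime) (hq : q.Prime)
    (hlt : q < p) (hg : orderOf g = q) (h : IsSkewBrace add zero neg mul one inv)
    (e₀ : A ≃ ZMod (p * q)) (he₀ : ∀ a b, e₀ (add a b) = e₀ a + e₀ b) :
    ∃ F : A ≃ ZMod p × ZMod q, (∀ a b, F (add a b) = F a + F b) ∧ ∃ c : ZMod q,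
      ∀ a b, F (mul a b) = ((F a).1 + g ^ (c * (F a).2).val * (F b).1, (F a).2 + (F b).2) := by
  have := Fact.mk hp
  have := Fact.mk hq
  have hco : p.Coprime q := (Nat.coprime_primes hp hq).2 hlt.ne'
  let χ := ZMod.chineseRemainder hco
  let F := e₀.trans χ.toEquiv
  have hF : ∀ a b, F (add a b) = F a + F b := fun a b => by simp [F, he₀]
  have hR : Function.Surjective (Nat.cast : ℕ → ZMod p × ZMod q) := by
    simpa [Function.comp_def] using χ.surjective.comp (ZMod.natCast_zmod_surjective (n := p * q))
  obtain ⟨u, hu_one, hu_mul, hFmul⟩ := h.exists_apply_mul_eq_add_mul hR F hF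
  let := h.2.1.toGroup
  let U : A →* ZMod p × ZMod q := ⟨⟨u, hu_one⟩, hu_mul⟩
  have hcard : Nat.card A = p * q := by rw [Nat.card_congr e₀, Nat.card_zmod]
  have hu_pow : ∀ a, u a ^ (p * q) = 1 := fun a => by
    rw [← hcard]
    exact (map_pow U a _).symm.trans (by rw [pow_card_eq_one', map_one])
  have hu := fun a => ZMod.fst_pow_eq_one_and_snd_eq_one_of_pow_mul_eq_one hlt (hu_pow a)
  let π : A →* Multiplicative (ZMod q) :=
    MonoidHom.mk' (fun a => Multiplicative.ofAdd (F a).2) fun a b => by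
      change Multiplicative.ofAdd (F (mul a b)).2 = Multiplicative.ofAdd ((F a).2 + (F b).2)
      simp [hFmul, (hu _).2]
  have hπ : Function.Surjective π := fun t => ⟨F.symm (0, t.toAdd), by simp [π]⟩
  have hker : Nat.card π.ker = p := Nat.eq_of_mul_eq_mul_right hq.pos <| by
    rw [← hcard, ← MonoidHom.card_ker_mul_card_of_surjective hπ]
    simp
  obtain ⟨ψ, hψ⟩ := MonoidHom.exists_eq_comp_of_coprime_card_ker hπ
    (f := (RingHom.fst _ _).toMonoidHom.comp U) (hker ▸ hco) fun a => (hu a).1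
  have hprim : IsPrimitiveRoot g q := hg ▸ IsPrimitiveRoot.orderOf g
  obtain ⟨c, hc⟩ := hprim.exists_apply_ofAdd_eq_pow_val ψ
  refine ⟨F, hF, c, fun a b => ?_⟩
  have h1 : (u a).1 = g ^ (c * (F a).2).val := (hψ a).trans (hc _)
  ext <;> simp [hFmul, h1, (hu a).2]

theorem IsSkewBrace.exists_equiv_semidirectMul_of_cyclic (hp : p.Prime) (hq : q.Prime)
    (hlt : q < p) (hg : orderOf g = q) (h : IsSkewBrace add zero neg mul one inv)
    (e₀ : A ≃ ZMod (p * q)) (he₀ : ∀ a b, e₀ (add a b) = e₀ a + e₀ b)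
    (hnt : ∃ a b, mul a b ≠ add a b) :
    ∃ e : A ≃ ZMod p × ZMod q, (∀ a b, e (add a b) = e a + e b) ∧
      ∀ a b, e (mul a b) = semidirectMul g (e a) (e b) := by
  have := Fact.mk hq
  obtain ⟨F, hF, c, hFmul⟩ := h.exists_equiv_apply_mul_eq_of_cyclic hp hq hlt hg e₀ he₀
  have hc : c ≠ 0 := by
    rintro rfl
    obtain ⟨a, b, hab⟩ := hnt
    exact hab (F.injective (by simp [hFmul, hF, Prod.ext_iff]))
  refine ⟨F.trans ((Equiv.refl _).prodCongr (Equiv.mulLeft₀ c hc)), fun a b => ?_,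
    fun a b => ?_⟩ <;> ext <;> simp [hF, hFmul, semidirectMul, mul_add]

end Uniqueness

theorem stmt14_general (p q : ℕ) (hp : p.Prime) (hq : q.Prime) (hlt : q < p)
    (g : ZMod p) (hg : orderOf g = q)
    (φ : Multiplicative (ZMod q) →* MulAut (Multiplicative (ZMod p)))
    (hφ : ∀ (m : ZMod q) (n : ZMod p),
      φ (Multiplicative.ofAdd m) (Multiplicative.ofAdd n) =
        Multiplicative.ofAdd (g ^ m.val * n)) :
    IsSkewBrace
      (fun x y : ZMod p × ZMod q => x + y) 0 (fun x => -x)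
      (fun x y : ZMod p × ZMod q => (x.1 + g ^ x.2.val * y.1, x.2 + y.2)) 0
      (fun x : ZMod p × ZMod q => (-(g ^ (q - x.2.val) * x.1), -x.2)) ∧
    IsSkewBrace
      (fun x y : ZMod p × ZMod q => (x.1 + g ^ x.2.val * y.1, x.2 + y.2)) 0
      (fun x : ZMod p × ZMod q => (-(g ^ (q - x.2.val) * x.1), -x.2))
      (fun x y : ZMod p × ZMod q => x + y) 0 (fun x => -x) ∧
    (∀ x y : ZMod p × ZMod q, x + y = y + x) ∧
    (∃ e : ZMod p × ZMod q → (Multiplicative (ZMod p) ⋊[φ] Multiplicative (ZMod q)),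
      Function.Bijective e ∧
      ∀ x y : ZMod p × ZMod q,
        e (x.1 + g ^ x.2.val * y.1, x.2 + y.2) = e x * e y) ∧
    (∃ x y : ZMod p × ZMod q, (x.1 + g ^ x.2.val * y.1, x.2 + y.2) ≠ x + y) ∧
    (∀ (A : Type) (add : A → A → A) (zero : A) (neg : A → A)
        (mul : A → A → A) (one : A) (inv : A → A),
      IsSkewBrace add zero neg mul one inv →
      (∃ e : A ≃ ZMod (p * q), ∀ a b, e (add a b) = e a + e b) →
      (∃ a b, mul a b ≠ add a b) →
      ∃ e : A ≃ ZMod p × ZMod q, (∀ a b, e (add a b) = e a + e b) ∧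
        (∀ a b, e (mul a b) =
          ((e a).1 + g ^ (e a).2.val * (e b).1, (e a).2 + (e b).2))) := by
  have := Fact.mk hq.one_lt
  have hgq : g ^ q = 1 := hg ▸ pow_orderOf_eq_one g
  have hg1 : g ≠ 1 := fun h => hq.one_lt.ne' (by rw [← hg, h, orderOf_one])
  exact ⟨isSkewBrace_add_semidirectMul hgq, isSkewBrace_semidirectMul_add hgq, add_comm,
    exists_bijective_semidirectProduct φ hφ, exists_semidirectMul_ne_add hg1,
    fun A add zero neg mul one inv h ⟨e₀, he₀⟩ hnt =>
      h.exists_equiv_semidirectMul_of_cyclic hp hq hlt hg e₀ he₀ hnt⟩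

/-- Let `p > q` be primes with `p ≡ 1 (mod q)` and `g` of multiplicative order `q`
mod `p`.  On `A = ℤ_p × ℤ_q` with componentwise addition and
`(n,m) ∘ (s,t) = (n + g^m s, m + t)`, the triple `(A,+,∘)` is a bi-skew brace with
abelian additive group, whose multiplicative group is isomorphic to `ℤ_p ⋊_g ℤ_q`;
it is non-trivial, and it is the unique non-trivial skew brace of order `pq` with
cyclic additive group, up to isomorphism. -/
theorem stmt14 (p q : ℕ) (hp : p.Prime) (hq : q.Prime) (hlt : q < p)
    (hmod : p % q = 1) (g : ZMod p) (hg : orderOf g = q)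
    (φ : Multiplicative (ZMod q) →* MulAut (Multiplicative (ZMod p)))
    (hφ : ∀ (m : ZMod q) (n : ZMod p),
      φ (Multiplicative.ofAdd m) (Multiplicative.ofAdd n) =
        Multiplicative.ofAdd (g ^ m.val * n)) :
    IsSkewBrace
      (fun x y : ZMod p × ZMod q => x + y) 0 (fun x => -x)
      (fun x y : ZMod p × ZMod q => (x.1 + g ^ x.2.val * y.1, x.2 + y.2)) 0
      (fun x : ZMod p × ZMod q => (-(g ^ (q - x.2.val) * x.1), -x.2)) ∧
    IsSkewBrace
      (fun x y : ZMod p × ZMod q => (x.1 + g ^ x.2.val * y.1, x.2 + y.2)) 0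
      (fun x : ZMod p × ZMod q => (-(g ^ (q - x.2.val) * x.1), -x.2))
      (fun x y : ZMod p × ZMod q => x + y) 0 (fun x => -x) ∧
    (∀ x y : ZMod p × ZMod q, x + y = y + x) ∧
    (∃ e : ZMod p × ZMod q → (Multiplicative (ZMod p) ⋊[φ] Multiplicative (ZMod q)),
      Function.Bijective e ∧
      ∀ x y : ZMod p × ZMod q,
        e (x.1 + g ^ x.2.val * y.1, x.2 + y.2) = e x * e y) ∧
    (∃ x y : ZMod p × ZMod q, (x.1 + g ^ x.2.val * y.1, x.2 + y.2) ≠ x + y) ∧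
    (∀ (A : Type) (add : A → A → A) (zero : A) (neg : A → A)
        (mul : A → A → A) (one : A) (inv : A → A),
      IsSkewBrace add zero neg mul one inv →
      (∃ e : A ≃ ZMod (p * q), ∀ a b, e (add a b) = e a + e b) →
      (∃ a b, mul a b ≠ add a b) →
      ∃ e : A ≃ ZMod p × ZMod q, (∀ a b, e (add a b) = e a + e b) ∧
        (∀ a b, e (mul a b) =
          ((e a).1 + g ^ (e a).2.val * (e b).1, (e a).2 + (e b).2))) :=
  stmt14_general p q hp hq hlt g hg φ hφ
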